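/- arXiv:1005.0315 — 3 statements merged into one kernel-verified Lean document; each statement's English description precedes it below -/
import Mathlib

section
/- The only integer solutions to the Diophantine equation y² + 2 = x³ are (x, y) = (3, 5) and (x, y) = (3, −5). -/
open Zsqrtd

namespace FermatChallengeAux

local notation "R" => Zsqrtd (-2)

theorem norm_def' (z : R) : z.norm = z.re * z.re + 2 * (z.im * z.im) := by
  rw [Zsqrtd.norm_def]; ring

theorem norm_pos' {z : R} (hz : z ≠ 0) : 0 < z.norm := by
  rcases lt_or_eq_of_le (Zsqrtd.norm_nonneg (by norm_num) z) with h | h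
  · exact h
  · exfalso
    apply hz
    rw [← Zsqrtd.norm_eq_zero_iff (by norm_num : (-2:ℤ) < 0)]
    omega

instance : Div R :=
  ⟨fun x y =>
    ⟨round ((((x * star y).re : ℤ) : ℚ) / ((y.norm : ℤ) : ℚ)),
     round ((((x * star y).im : ℤ) : ℚ) / ((y.norm : ℤ) : ℚ))⟩⟩

theorem div_def (x y : R) : x / y =
    ⟨round ((((x * star y).re : ℤ) : ℚ) / ((y.norm : ℤ) : ℚ)),
     round ((((x * star y).im : ℤ) : ℚ) / ((y.norm : ℤ) : ℚ))⟩ := rfl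

instance : Mod R := ⟨fun x y => x - y * (x / y)⟩

theorem mod_def (x y : R) : x % y = x - y * (x / y) := rfl

theorem round_bound (u n : ℤ) (hn : 0 < n) :
    ((u - n * round ((u : ℚ) / (n : ℚ)) : ℤ) : ℚ) ^ 2 ≤ (n : ℚ) ^ 2 / 4 := by
  have hnq : (0 : ℚ) < (n : ℚ) := by exact_mod_cast hn
  have h1 : |(u : ℚ) / n - round ((u : ℚ) / n)| ≤ 1 / 2 := abs_sub_round _
  have h2 : ((u - n * round ((u : ℚ) / (n : ℚ)) : ℤ) : ℚ)
      = (n : ℚ) * ((u : ℚ) / n - round ((u : ℚ) / n)) := by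
    push_cast
    field_simp
  rw [h2, mul_pow]
  have h3 : ((u : ℚ) / n - round ((u : ℚ) / n)) ^ 2 ≤ (1/2) ^ 2 := by
    rw [← sq_abs]
    exact pow_le_pow_left₀ (abs_nonneg _) h1 2
  nlinarith [sq_nonneg ((n:ℚ))]

theorem norm_mod_lt (x : R) {y : R} (hy : y ≠ 0) : (x % y).norm < y.norm := by
  have hn : 0 < y.norm := norm_pos' hy
  set n : ℤ := y.norm with hndef
  set u : R := x * star y with hudef
  have key : (x % y) * star y = u - (n : R) * (x / y) := by
    rw [mod_def, Zsqrtd.norm_eq_mul_conj]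
    ring
  set d : R := x / y with hddef
  have hre : ((x % y) * star y).re = u.re - n * d.re := by
    rw [key]; simp [Zsqrtd.re_sub, Zsqrtd.re_mul]
  have him : ((x % y) * star y).im = u.im - n * d.im := by
    rw [key]; simp [Zsqrtd.im_sub, Zsqrtd.im_mul]
  have hdre : d.re = round ((u.re : ℚ) / (n : ℚ)) := by rw [hddef, div_def]
  have hdim : d.im = round ((u.im : ℚ) / (n : ℚ)) := by rw [hddef, div_def]
  have b1 : ((u.re - n * d.re : ℤ) : ℚ) ^ 2 ≤ (n : ℚ) ^ 2 / 4 := by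
    rw [hdre]; exact round_bound u.re n hn
  have b2 : ((u.im - n * d.im : ℤ) : ℚ) ^ 2 ≤ (n : ℚ) ^ 2 / 4 := by
    rw [hdim]; exact round_bound u.im n hn
  have hnormmul : (x % y).norm * n = ((x % y) * star y).norm := by
    rw [Zsqrtd.norm_mul, Zsqrtd.norm_conj]
  have hnormval : ((x % y) * star y).norm
      = (u.re - n * d.re) * (u.re - n * d.re) + 2 * ((u.im - n * d.im) * (u.im - n * d.im)) := by
    rw [norm_def', hre, him]
  have hq : (((x % y).norm : ℚ)) * (n : ℚ) < (n : ℚ) * (n : ℚ) := by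
    have : (((x % y).norm * n : ℤ) : ℚ)
        = ((u.re - n * d.re : ℤ) : ℚ) ^ 2 + 2 * ((u.im - n * d.im : ℤ) : ℚ) ^ 2 := by
      rw [hnormmul, hnormval]; push_cast; ring
    have hnq : (0 : ℚ) < (n : ℚ) := by exact_mod_cast hn
    push_cast at this b1 b2
    nlinarith [b1, b2, hnq, this]
  have hnq : (0 : ℚ) < (n : ℚ) := by exact_mod_cast hn
  have : ((x % y).norm : ℚ) < (n : ℚ) := by
    exact lt_of_mul_lt_mul_right (by linarith [hq]) (le_of_lt hnq)
  exact_mod_cast this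

theorem natAbs_norm_mod_lt (x : R) {y : R} (hy : y ≠ 0) :
    (x % y).norm.natAbs < y.norm.natAbs := by
  have h := norm_mod_lt x hy
  have h1 := Zsqrtd.norm_nonneg (by norm_num : (-2:ℤ) ≤ 0) (x % y)
  have h2 := Zsqrtd.norm_nonneg (by norm_num : (-2:ℤ) ≤ 0) y
  omega

theorem norm_le_norm_mul_left (x : R) {y : R} (hy : y ≠ 0) :
    (norm x).natAbs ≤ (norm (x * y)).natAbs := by
  rw [Zsqrtd.norm_mul, Int.natAbs_mul]
  have := norm_pos' hy
  have : 1 ≤ (norm y).natAbs := by omega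
  exact le_mul_of_one_le_right (Nat.zero_le _) this

instance : EuclideanDomain R :=
  { (inferInstance : CommRing R),
    (inferInstance : Nontrivial R) with
    quotient := (· / ·)
    remainder := (· % ·)
    quotient_zero := fun a => by
      show a / 0 = 0
      rw [div_def]
      simp [Zsqrtd.ext_iff]
    quotient_mul_add_remainder_eq := fun a b => by
      show b * (a / b) + a % b = a
      rw [mod_def]; ring
    r := _
    r_wellFounded := (measure (Int.natAbs ∘ norm)).wf
    remainder_lt := fun a b hb => natAbs_norm_mod_lt a hb
    mul_left_not_lt := fun a b hb0 => not_lt_of_ge <| norm_le_norm_mul_left a hb0 }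

theorem unit_eq {u : R} (hu : IsUnit u) : u = 1 ∨ u = -1 := by
  have h1 : u.norm = 1 := (Zsqrtd.norm_eq_one_iff' (by norm_num) u).mpr hu
  rw [norm_def'] at h1
  set r := u.re with hr
  set i := u.im with hi
  have him : i = 0 := by nlinarith [mul_self_nonneg r, mul_self_nonneg i, mul_self_nonneg (i - 1), mul_self_nonneg (i + 1)]
  have hrr : r * r = 1 := by rw [him] at h1; linarith
  have : (r - 1) * (r + 1) = 0 := by linear_combination hrr
  rcases mul_eq_zero.mp this with h | h
  · left; rw [Zsqrtd.ext_iff]; constructor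
    · simp [← hr]; omega
    · simp [← hi, him]
  · right; rw [Zsqrtd.ext_iff]; constructor
    · simp [← hr]; omega
    · simp [← hi, him]

end FermatChallengeAux

open FermatChallengeAux

theorem fermat_challenge (x y : ℤ) :
    y ^ 2 + 2 = x ^ 3 ↔ (x = 3 ∧ y = 5) ∨ (x = 3 ∧ y = -5) := by
  constructor
  · intro h
    -- x is odd
    have hxodd : ¬ (2 : ℤ) ∣ x := by
      rintro ⟨k, hk⟩
      have h8 : ((y : ZMod 8)) ^ 2 + 2 = (2 * (k : ZMod 8)) ^ 3 := by
        have := congrArg (fun t : ℤ => (t : ZMod 8)) h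
        push_cast at this
        rw [hk] at this
        push_cast at this
        convert this using 2 <;> push_cast <;> ring
      have : ∀ a b : ZMod 8, b ^ 2 + 2 ≠ (2 * a) ^ 3 := by decide
      exact this _ _ h8
    -- setup in Z[sqrt(-2)]
    set a : Zsqrtd (-2) := ⟨y, 1⟩ with ha
    set b : Zsqrtd (-2) := ⟨y, -1⟩ with hb
    have hprod : a * b = (x : Zsqrtd (-2)) ^ 3 := by
      rw [Zsqrtd.ext_iff]
      constructor
      · show a.re * b.re + (-2) * a.im * b.im = ((x : Zsqrtd (-2)) ^ 3).re
        have : (x : Zsqrtd (-2)) ^ 3 = ((x ^ 3 : ℤ) : Zsqrtd (-2)) := by push_cast; ring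
        rw [this, Zsqrtd.re_intCast, ha, hb, ← h]
        ring
      · show a.re * b.im + a.im * b.re = ((x : Zsqrtd (-2)) ^ 3).im
        have : (x : Zsqrtd (-2)) ^ 3 = ((x ^ 3 : ℤ) : Zsqrtd (-2)) := by push_cast; ring
        rw [this, Zsqrtd.im_intCast, ha, hb]
        ring
    have hna : a.norm = x ^ 3 := by
      rw [norm_def', ha, ← h]; ring
    have hrel : IsRelPrime a b := by
      intro d hda hdb
      have hdiff : d ∣ (⟨0, 2⟩ : Zsqrtd (-2)) := by
        have h2 : a - b = (⟨0, 2⟩ : Zsqrtd (-2)) := by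
          rw [Zsqrtd.ext_iff]; simp [ha, hb, Zsqrtd.re_sub, Zsqrtd.im_sub]
        rw [← h2]; exact dvd_sub hda hdb
      have hn8 : d.norm ∣ 8 := by
        obtain ⟨c, hc⟩ := hdiff
        have : (⟨0, 2⟩ : Zsqrtd (-2)).norm = d.norm * c.norm := by rw [hc, Zsqrtd.norm_mul]
        have h8 : (⟨0, 2⟩ : Zsqrtd (-2)).norm = 8 := by rw [norm_def']; norm_num
        exact ⟨c.norm, by omega⟩
      have hnx : d.norm ∣ x ^ 3 := by
        obtain ⟨c, hc⟩ := hda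
        refine ⟨c.norm, ?_⟩
        rw [← hna, hc, Zsqrtd.norm_mul]
      have hnodd : ¬ (2 : ℤ) ∣ d.norm := by
        intro h2
        have : (2 : ℤ) ∣ x ^ 3 := dvd_trans h2 hnx
        have := (Int.Prime.dvd_pow' (by norm_num) this)
        exact hxodd this
      have hnn : 0 ≤ d.norm := Zsqrtd.norm_nonneg (by norm_num) d
      have hne : d.norm ≠ 0 := by
        intro h0
        rw [h0] at hn8
        omega
      have hle : d.norm ≤ 8 := Int.le_of_dvd (by norm_num) hn8
      have h1 : d.norm = 1 := by
        interval_cases h : d.norm <;> omega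
      rw [← Zsqrtd.norm_eq_one_iff]
      omega
    have hcop : IsCoprime a b := hrel.isCoprime
    obtain ⟨c, u, hcu⟩ := exists_associated_pow_of_mul_eq_pow' hcop hprod
    have he : ∃ e : Zsqrtd (-2), e ^ 3 = a := by
      rcases unit_eq u.isUnit with h1 | h1
      · exact ⟨c, by rw [← hcu, h1, mul_one]⟩
      · refine ⟨-c, ?_⟩
        rw [← hcu, h1]
        push_cast
        ring
    obtain ⟨e, hee⟩ := he
    set p := e.re with hp
    set q := e.im with hq
    have hcube_re : (e ^ 3).re = p * p * p - 6 * (p * (q * q)) := by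
      have h3 : e ^ 3 = e * e * e := by ring
      rw [h3]
      simp only [Zsqrtd.re_mul, Zsqrtd.im_mul]
      ring
    have hcube_im : (e ^ 3).im = 3 * (p * p) * q - 2 * (q * (q * q)) := by
      have h3 : e ^ 3 = e * e * e := by ring
      rw [h3]
      simp only [Zsqrtd.re_mul, Zsqrtd.im_mul]
      ring
    have hyeq : y = p * p * p - 6 * (p * (q * q)) := by
      rw [← hcube_re, hee, ha]
    have h1eq : 1 = 3 * (p * p) * q - 2 * (q * (q * q)) := by
      rw [← hcube_im, hee, ha]
    have hfact : q * (3 * (p * p) - 2 * (q * q)) = 1 := by linear_combination -h1eq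
    have hq1 : q = 1 ∨ q = -1 := by
      have : q ∣ 1 := ⟨_, hfact.symm⟩
      exact Int.isUnit_iff.mp (isUnit_of_dvd_one this)
    have hpq : p = 1 ∧ q = 1 ∨ p = -1 ∧ q = 1 := by
      rcases hq1 with h1 | h1
      · rw [h1] at hfact
        have h3 : 3 * (p * p) = 3 * 1 := by linear_combination hfact
        have hpp : p * p = 1 := mul_left_cancel₀ (by norm_num : (3:ℤ) ≠ 0) h3
        have : (p - 1) * (p + 1) = 0 := by linear_combination hpp
        rcases mul_eq_zero.mp this with h2 | h2
        · left; constructor <;> omega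
        · right; constructor <;> omega
      · rw [h1] at hfact
        exfalso
        have hk : (3 : ℤ) ∣ 1 := ⟨p * p, by linear_combination hfact⟩
        norm_num at hk
    have hy5 : y = -5 ∨ y = 5 := by
      rcases hpq with ⟨hp1, hq1⟩ | ⟨hp1, hq1⟩
      · left; rw [hyeq, hp1, hq1]; ring
      · right; rw [hyeq, hp1, hq1]; ring
    have hx3 : x = 3 := by
      have hx27 : x ^ 3 = 27 := by
        rcases hy5 with h5 | h5 <;> rw [← h, h5] <;> norm_num
      have hfac : (x - 3) * (x ^ 2 + 3 * x + 9) = 0 := by linear_combination hx27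
      rcases mul_eq_zero.mp hfac with h2 | h2
      · omega
      · exfalso; nlinarith [sq_nonneg (2 * x + 3)]
    rcases hy5 with h5 | h5
    · right; exact ⟨hx3, h5⟩
    · left; exact ⟨hx3, h5⟩
  · rintro (⟨hx, hy⟩ | ⟨hx, hy⟩) <;> subst hx <;> subst hy <;> norm_num
end

section
/- In the ring Z[√−2], if y is an odd integer then the greatest common divisor of y + √−2 and y − √−2 is a unit (i.e., the two elements are coprime). -/
theorem coprime_factors_in_Zsqrtd (y : ℤ) (hy : Odd y)
    (g : Zsqrtd (-2)) (h1 : g ∣ (⟨y, 1⟩ : Zsqrtd (-2))) (h2 : g ∣ (⟨y, -1⟩ : Zsqrtd (-2))) :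
    IsUnit g := by
  rw [← Zsqrtd.norm_eq_one_iff]
  have hd1 : g.norm ∣ (⟨y, 1⟩ : Zsqrtd (-2)).norm := by
    obtain ⟨c, hc⟩ := h1; exact ⟨c.norm, by rw [hc, Zsqrtd.norm_mul]⟩
  have hd2 : g.norm ∣ (⟨0, 2⟩ : Zsqrtd (-2)).norm := by
    have heq : (⟨y, 1⟩ : Zsqrtd (-2)) - ⟨y, -1⟩ = ⟨0, 2⟩ := by
      ext <;> simp
    have : g ∣ (⟨0, 2⟩ : Zsqrtd (-2)) := heq ▸ dvd_sub h1 h2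
    obtain ⟨c, hc⟩ := this; exact ⟨c.norm, by rw [hc, Zsqrtd.norm_mul]⟩
  have hn1 : (⟨y, 1⟩ : Zsqrtd (-2)).norm = y * y + 2 := by
    rw [Zsqrtd.norm_def]; ring
  have hn2 : (⟨0, 2⟩ : Zsqrtd (-2)).norm = 8 := by
    rw [Zsqrtd.norm_def]; ring
  rw [hn1] at hd1
  rw [hn2] at hd2
  set n := g.norm.natAbs with hn
  have hd1' : n ∣ (y * y + 2).natAbs := Int.natAbs_dvd_natAbs.mpr hd1
  have hd2' : n ∣ 8 := by
    have := Int.natAbs_dvd_natAbs.mpr hd2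
    simpa using this
  have hodd : Odd (y * y + 2).natAbs := by
    rw [Int.natAbs_odd]
    exact (hy.mul hy).add_even (by decide)
  have hnodd : Odd n := hodd.of_dvd_nat hd1'
  have hcop : Nat.Coprime n 2 := Nat.coprime_two_right.mpr hnodd
  have : n ∣ 2 ^ 3 := by norm_num at hd2' ⊢; exact hd2'
  exact (Nat.Coprime.pow_right 3 hcop).eq_one_of_dvd this
end

section
/- The only solution in positive integers to y² = x³ + 1 is (x, y) = (2, 3). -/
/-!
Write `y = 2t + 1` (for even `y`, the coprime factors `y ∓ 1` of `x³` would be cubes differing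
by `2`) and `x = 2w`, so that `t(t + 1) = 2w³`. Splitting the coprime factors of `t(t + 1)`
into cubes gives `d³ ± 1 = 2c³`, and Euler's theorem that `x³ + y³ = 2z³` has no coprime
solutions other than `x = ±y` forces `d = ±1`, hence `t = 1`.

Euler's theorem is proved by descent. Putting `x = p + q`, `y = p - q` gives
`p (p² + 3q²) = z³`; if `p² + 3q²` is a cube with `p, q` coprime then `p + q√-3` is a cube,
which follows from unique factorisation in the Euclidean domain `ℤ[ω]`. Reading off the cube
root `u + v√-3` factors `p` (or `p/9` when `3 ∣ p`) into three pairwise coprime linear forms in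
`u, v`, each a cube, and these cubes form a solution with smaller `|z|`.
-/

/-- `a + b ω`, where `ω² + ω + 1 = 0`. -/
@[ext]
structure EisensteinInt where
  a : ℤ
  b : ℤ

namespace EisensteinInt

instance : Zero EisensteinInt := ⟨⟨0, 0⟩⟩
instance : One EisensteinInt := ⟨⟨1, 0⟩⟩
instance : Add EisensteinInt := ⟨fun x y => ⟨x.a + y.a, x.b + y.b⟩⟩
instance : Neg EisensteinInt := ⟨fun x => ⟨-x.a, -x.b⟩⟩
instance : Mul EisensteinInt :=
  ⟨fun x y => ⟨x.a * y.a - x.b * y.b, x.a * y.b + x.b * y.a - x.b * y.b⟩⟩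

@[simp] theorem zero_a : (0 : EisensteinInt).a = 0 := rfl
@[simp] theorem zero_b : (0 : EisensteinInt).b = 0 := rfl
@[simp] theorem one_a : (1 : EisensteinInt).a = 1 := rfl
@[simp] theorem one_b : (1 : EisensteinInt).b = 0 := rfl
@[simp] theorem add_a (x y : EisensteinInt) : (x + y).a = x.a + y.a := rfl
@[simp] theorem add_b (x y : EisensteinInt) : (x + y).b = x.b + y.b := rfl
@[simp] theorem neg_a (x : EisensteinInt) : (-x).a = -x.a := rfl
@[simp] theorem neg_b (x : EisensteinInt) : (-x).b = -x.b := rfl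
@[simp] theorem mul_a (x y : EisensteinInt) : (x * y).a = x.a * y.a - x.b * y.b := rfl
@[simp] theorem mul_b (x y : EisensteinInt) :
    (x * y).b = x.a * y.b + x.b * y.a - x.b * y.b := rfl

instance : NatCast EisensteinInt := ⟨fun n => ⟨n, 0⟩⟩
instance : IntCast EisensteinInt := ⟨fun n => ⟨n, 0⟩⟩

@[simp] theorem natCast_a (n : ℕ) : (n : EisensteinInt).a = n := rfl
@[simp] theorem natCast_b (n : ℕ) : (n : EisensteinInt).b = 0 := rfl
@[simp] theorem intCast_a (n : ℤ) : (n : EisensteinInt).a = n := rfl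
@[simp] theorem intCast_b (n : ℤ) : (n : EisensteinInt).b = 0 := rfl
@[simp] theorem ofNat_a (n : ℕ) [n.AtLeastTwo] : (ofNat(n) : EisensteinInt).a = ofNat(n) := rfl
@[simp] theorem ofNat_b (n : ℕ) [n.AtLeastTwo] : (ofNat(n) : EisensteinInt).b = 0 := rfl

instance : CommRing EisensteinInt where
  add_assoc x y z := by ext <;> simp [add_assoc]
  zero_add x := by ext <;> simp
  add_zero x := by ext <;> simp
  add_comm x y := by ext <;> simp [add_comm]
  neg_add_cancel x := by ext <;> simp
  left_distrib x y z := by ext <;> simp <;> ring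
  right_distrib x y z := by ext <;> simp <;> ring
  zero_mul x := by ext <;> simp
  mul_zero x := by ext <;> simp
  mul_assoc x y z := by ext <;> simp <;> ring
  one_mul x := by ext <;> simp
  mul_one x := by ext <;> simp
  mul_comm x y := by ext <;> simp <;> ring
  nsmul := nsmulRec
  zsmul := zsmulRec
  natCast_zero := rfl
  natCast_succ n := by ext <;> simp
  intCast_ofNat n := rfl
  intCast_negSucc n := by ext <;> simp [Int.negSucc_eq]

@[simp] theorem sub_a (x y : EisensteinInt) : (x - y).a = x.a - y.a := rfl
@[simp] theorem sub_b (x y : EisensteinInt) : (x - y).b = x.b - y.b := rfl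

instance : Nontrivial EisensteinInt := ⟨⟨0, 1, by simp [EisensteinInt.ext_iff]⟩⟩

def ω : EisensteinInt := ⟨0, 1⟩

def norm (x : EisensteinInt) : ℤ := x.a ^ 2 - x.a * x.b + x.b ^ 2

def conj (x : EisensteinInt) : EisensteinInt := ⟨x.a - x.b, -x.b⟩

theorem mul_conj (x : EisensteinInt) : x * conj x = x.norm := by
  ext <;> simp only [mul_a, mul_b, conj, intCast_a, intCast_b, EisensteinInt.norm] <;> ring

theorem norm_mul (x y : EisensteinInt) : (x * y).norm = x.norm * y.norm := by
  simp only [norm, mul_a, mul_b]; ring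

theorem four_mul_norm (x : EisensteinInt) : 4 * x.norm = (2 * x.a - x.b) ^ 2 + 3 * x.b ^ 2 := by
  rw [norm]; ring

theorem norm_nonneg (x : EisensteinInt) : 0 ≤ x.norm := by
  nlinarith [four_mul_norm x, sq_nonneg (2 * x.a - x.b), sq_nonneg x.b]

theorem norm_eq_zero {x : EisensteinInt} : x.norm = 0 ↔ x = 0 := by
  refine ⟨fun h => ?_, fun h => by simp [h, norm]⟩
  have hb : x.b = 0 := by nlinarith [four_mul_norm x, sq_nonneg (2 * x.a - x.b), sq_nonneg x.b]
  have ha : x.a = 0 := by nlinarith [four_mul_norm x, sq_nonneg (2 * x.a - x.b)]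
  ext <;> simp [ha, hb]

theorem isUnit_iff_norm_eq_one {x : EisensteinInt} : IsUnit x ↔ x.norm = 1 := by
  refine ⟨fun ⟨u, hu⟩ => ?_, fun h => IsUnit.of_mul_eq_one (conj x) (by simp [mul_conj, h])⟩
  have h := congrArg norm u.mul_inv
  rw [norm_mul, hu] at h
  exact Int.eq_one_of_mul_eq_one_right (norm_nonneg x) (by simpa [norm] using h)

theorem isUnit_eq_one_or {x : EisensteinInt} (hx : IsUnit x) :
    x = 1 ∨ x = -1 ∨ x = ω ∨ x = -ω ∨ x = -ω ^ 2 ∨ x = ω ^ 2 := by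
  have h := four_mul_norm x
  rw [isUnit_iff_norm_eq_one.mp hx] at h
  have hb1 : -1 ≤ x.b := by nlinarith [sq_nonneg (2 * x.a - x.b)]
  have hb2 : x.b ≤ 1 := by nlinarith [sq_nonneg (2 * x.a - x.b)]
  have ha1 : -1 ≤ x.a := by nlinarith [sq_nonneg x.b]
  have ha2 : x.a ≤ 1 := by nlinarith [sq_nonneg x.b]
  obtain ⟨a, b⟩ := x
  simp only at *
  interval_cases a <;> interval_cases b <;> simp_all [EisensteinInt.ext_iff, ω, pow_two]

/-- `m / n` rounded to a nearest integer, for `0 < n`. -/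
def roundDiv (m n : ℤ) : ℤ := (2 * m + n) / (2 * n)

theorem abs_two_mul_sub_mul_roundDiv_le {m n : ℤ} (hn : 0 < n) :
    |2 * (m - n * roundDiv m n)| ≤ n := by
  have h := Int.mul_ediv_add_emod (2 * m + n) (2 * n)
  have h0 := Int.emod_nonneg (2 * m + n) (by omega : 2 * n ≠ 0)
  have h1 := Int.emod_lt_of_pos (2 * m + n) (by omega : 0 < 2 * n)
  rw [roundDiv, abs_le]
  constructor <;> linarith

instance : Div EisensteinInt :=
  ⟨fun x y => ⟨roundDiv (x * conj y).a y.norm, roundDiv (x * conj y).b y.norm⟩⟩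

@[simp] theorem div_a (x y : EisensteinInt) : (x / y).a = roundDiv (x * conj y).a y.norm := rfl
@[simp] theorem div_b (x y : EisensteinInt) : (x / y).b = roundDiv (x * conj y).b y.norm := rfl

instance : Mod EisensteinInt := ⟨fun x y => x - y * (x / y)⟩

theorem norm_mod_lt (x : EisensteinInt) {y : EisensteinInt} (hy : y ≠ 0) :
    (x % y).norm < y.norm := by
  have hn : 0 < y.norm := (norm_nonneg y).lt_of_ne' (mt norm_eq_zero.mp hy)
  set e : EisensteinInt := x * conj y - y.norm * (x / y)
  have he : (x % y) * conj y = e := by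
    change (x - y * (x / y)) * conj y = _
    rw [sub_mul, mul_right_comm, mul_conj]
  have h1 := abs_le.mp (abs_two_mul_sub_mul_roundDiv_le (m := (x * conj y).a) hn)
  have h2 := abs_le.mp (abs_two_mul_sub_mul_roundDiv_le (m := (x * conj y).b) hn)
  have hconj : (conj y).norm = y.norm := by simp only [conj, EisensteinInt.norm]; ring
  have hnorm : (x % y).norm * y.norm = e.a ^ 2 - e.a * e.b + e.b ^ 2 := by
    rw [← hconj, ← norm_mul, he, EisensteinInt.norm]
  have hea : e.a = (x * conj y).a - y.norm * roundDiv (x * conj y).a y.norm := by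
    simp [e]
  have heb : e.b = (x * conj y).b - y.norm * roundDiv (x * conj y).b y.norm := by
    simp [e]
  rw [← hea] at h1; rw [← heb] at h2
  nlinarith [norm_nonneg (x % y)]

instance : EuclideanDomain EisensteinInt where
  quotient := (· / ·)
  remainder := (· % ·)
  quotient_zero x := by
    ext <;> simp [roundDiv, EisensteinInt.norm]
  quotient_mul_add_remainder_eq x y := by
    change y * (x / y) + (x - y * (x / y)) = x; ring
  r x y := x.norm.natAbs < y.norm.natAbs
  r_wellFounded := (measure fun x : EisensteinInt => x.norm.natAbs).wf
  remainder_lt x y hy := by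
    have := norm_mod_lt x hy; have := norm_nonneg (x % y); omega
  mul_left_not_lt x y hy := by
    have hn : 0 < y.norm := (norm_nonneg y).lt_of_ne' (mt norm_eq_zero.mp hy)
    rw [not_lt, norm_mul, Int.natAbs_mul]
    exact Nat.le_mul_of_pos_right _ (by omega)

/-- `p + q √-3`, where `√-3 = 1 + 2ω`. -/
def ofSqrt (p q : ℤ) : EisensteinInt := ⟨p + q, 2 * q⟩

theorem ofSqrt_injective {p q p' q' : ℤ} (h : ofSqrt p q = ofSqrt p' q') : p = p' ∧ q = q' := by
  simp only [ofSqrt, EisensteinInt.mk.injEq] at h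
  omega

theorem ofSqrt_pow_three (u v : ℤ) :
    ofSqrt u v ^ 3 = ofSqrt (u ^ 3 - 9 * u * v ^ 2) (3 * u ^ 2 * v - 3 * v ^ 3) := by
  ext <;> simp [ofSqrt, pow_succ] <;> ring

theorem ofSqrt_mul_conj (p q : ℤ) :
    ofSqrt p q * conj (ofSqrt p q) = ((p ^ 2 + 3 * q ^ 2 : ℤ) : EisensteinInt) := by
  ext <;> simp only [ofSqrt, conj, mul_a, mul_b, intCast_a, intCast_b] <;> ring

theorem exists_ofSqrt_eq {z : EisensteinInt} (hz : Even z.b) : ∃ u v, ofSqrt u v = z := by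
  obtain ⟨v, hv⟩ := hz
  exact ⟨z.a - v, v, by ext <;> simp [ofSqrt]; omega⟩

theorem even_b_pow_three (z : EisensteinInt) : Even (z ^ 3).b := by
  have h : (z ^ 3).b = 3 * (z.a * z.b * (z.a - z.b)) := by simp [pow_succ]; ring
  rw [h]
  rcases Int.even_or_odd z.a with ha | ha <;> rcases Int.even_or_odd z.b with hb | hb <;>
    simp [Int.even_mul, Int.even_sub, ha, hb, Int.not_even_iff_odd.mpr]

theorem ω_pow_three : ω ^ 3 = 1 := by
  ext <;> simp [ω, pow_succ]

theorem exists_ofSqrt_pow_three_eq (z : EisensteinInt) : ∃ u v, ofSqrt u v ^ 3 = z ^ 3 := by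
  obtain ⟨k, hk⟩ : ∃ k : ℕ, Even (ω ^ k * z).b := by
    rcases Int.even_or_odd z.a with ha | ha <;> rcases Int.even_or_odd z.b with hb | hb
    · exact ⟨0, by simpa using hb⟩
    · exact ⟨2, by simpa [ω, pow_two] using ha⟩
    · exact ⟨0, by simpa using hb⟩
    · exact ⟨1, by simpa [ω] using ha.sub_odd hb⟩
  obtain ⟨u, v, huv⟩ := exists_ofSqrt_eq hk
  refine ⟨u, v, ?_⟩
  rw [huv, mul_pow, ← pow_mul, mul_comm k, pow_mul, ω_pow_three, one_pow, one_mul]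

theorem exists_pow_three_eq_of_associated {γ : EisensteinInt} {p q : ℤ} (hpq : Odd (p + q))
    (h : Associated (γ ^ 3) (ofSqrt p q)) : ∃ δ, δ ^ 3 = ofSqrt p q := by
  -- Cubes have even `b`-coordinate, so the parities of `ofSqrt p q` rule out `ε = ±ω, ±ω²`.
  obtain ⟨ε, hε⟩ := h
  have hc := Int.even_iff.mp (even_b_pow_three γ)
  have ha : (γ ^ 3 * ε).a = p + q := by rw [hε]; rfl
  have hb : (γ ^ 3 * ε).b = 2 * q := by rw [hε]; rfl
  rw [Int.odd_iff] at hpq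
  rcases isUnit_eq_one_or ε.isUnit with h | h | h | h | h | h <;> rw [h] at ha hb hε
  · exact ⟨γ, by rw [← hε, mul_one]⟩
  · exact ⟨-γ, by rw [← hε]; ring⟩
  all_goals simp [ω, pow_two] at ha hb; omega

theorem isCoprime_ofSqrt_conj {p q : ℤ} (hpq : IsCoprime p q) (h2 : Odd (p + q))
    (h3 : ¬ 3 ∣ p) : IsCoprime (ofSqrt p q) (conj (ofSqrt p q)) := by
  have hN : IsCoprime (p ^ 2 + 3 * q ^ 2) (2 * 2 * 3) := by
    have hN2 : IsCoprime (p ^ 2 + 3 * q ^ 2) 2 := by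
      rw [Int.isCoprime_two_right]
      simpa [Int.odd_add, Int.odd_mul, Int.odd_pow, parity_simps, show ¬Even (3 : ℤ) by decide]
        using h2
    have hN3 : IsCoprime (p ^ 2 + 3 * q ^ 2) 3 := by
      refine (Int.prime_three.coprime_iff_not_dvd.mpr fun h => h3 ?_).symm
      exact Int.Prime.dvd_pow' (p := 3) Nat.prime_three ((dvd_add_left (dvd_mul_right 3 _)).mp h)
    exact (hN2.mul_right hN2).mul_right hN3
  -- A common divisor divides `2p`, `2q√-3`, hence `2√-3` and `(2√-3)² = -12`, and the norm.
  refine isRelPrime_iff_isCoprime.mp fun d hd hd' => ?_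
  obtain ⟨A, B, hAB⟩ := hpq
  have hsum : d ∣ ((2 * p : ℤ) : EisensteinInt) := by
    convert dvd_add hd hd' using 1; ext <;> simp [ofSqrt, conj]; ring
  have hdiff : d ∣ ((2 * q : ℤ) : EisensteinInt) * ofSqrt 0 1 := by
    convert dvd_sub hd hd' using 1; ext <;> simp [ofSqrt, conj]; ring
  have h12 : d ∣ ((2 * 2 * 3 : ℤ) : EisensteinInt) := by
    have hs : d ∣ 2 * ofSqrt 0 1 := by
      convert dvd_add ((hsum.mul_right (ofSqrt 0 1)).mul_left A) (hdiff.mul_left B) using 1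
      ext <;> simp [ofSqrt]
      · linear_combination (-2) * hAB
      · linear_combination (-4) * hAB
    convert (hs.mul_right (2 * ofSqrt 0 1)).neg_right using 1; ext <;> simp [ofSqrt]
  refine (hN.intCast (R := EisensteinInt)).isUnit_of_dvd' ?_ h12
  rw [← ofSqrt_mul_conj]
  exact hd.mul_right _

end EisensteinInt

open EisensteinInt

theorem odd_add_of_sq_add_three_mul_sq_eq_pow_three {p q S : ℤ} (hpq : IsCoprime p q)
    (h : p ^ 2 + 3 * q ^ 2 = S ^ 3) : Odd (p + q) := by
  by_contra hpq_even
  rw [Int.not_odd_iff_even, Int.even_add] at hpq_even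
  have hp : Odd p := by
    refine Int.not_even_iff_odd.mp fun hp => ?_
    have h2 := hpq.isUnit_of_dvd' hp.two_dvd (hpq_even.mp hp).two_dvd
    norm_num [Int.isUnit_iff] at h2
  have hq : Odd q := Int.not_even_iff_odd.mp (mt hpq_even.mpr (Int.not_even_iff_odd.mpr hp))
  -- For odd `p, q` we get `p² + 3q² ≡ 4 (mod 8)`, which is not a cube.
  obtain ⟨k, rfl⟩ := hp
  obtain ⟨l, rfl⟩ := hq
  have h8 := congrArg (Int.cast : ℤ → ZMod 8) h
  push_cast at h8
  exact (by decide : ∀ k l S : ZMod 8, (2 * k + 1) ^ 2 + 3 * (2 * l + 1) ^ 2 ≠ S ^ 3) _ _ _ h8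

theorem not_three_dvd_of_sq_add_three_mul_sq_eq_pow_three {p q S : ℤ} (hpq : IsCoprime p q)
    (h : p ^ 2 + 3 * q ^ 2 = S ^ 3) : ¬ 3 ∣ p := by
  rintro ⟨r, rfl⟩
  obtain ⟨s, rfl⟩ : 3 ∣ S := Int.prime_three.dvd_of_dvd_pow (n := 3)
    ⟨3 * r ^ 2 + q ^ 2, by linear_combination -h⟩
  have hq : 3 ∣ q := Int.prime_three.dvd_of_dvd_pow (n := 2) ⟨3 * s ^ 3 - r ^ 2, by linarith⟩
  have h3 := hpq.isUnit_of_dvd' (dvd_mul_right 3 r) hq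
  norm_num [Int.isUnit_iff] at h3

/-- Euler: `p + q √-3 = (u + v √-3)³`. -/
theorem exists_of_sq_add_three_mul_sq_eq_pow_three {p q S : ℤ} (hpq : IsCoprime p q)
    (h : p ^ 2 + 3 * q ^ 2 = S ^ 3) :
    ∃ u v : ℤ, p = u ^ 3 - 9 * u * v ^ 2 ∧ q = 3 * u ^ 2 * v - 3 * v ^ 3 := by
  have hodd := odd_add_of_sq_add_three_mul_sq_eq_pow_three hpq h
  have hco := isCoprime_ofSqrt_conj hpq hodd
    (not_three_dvd_of_sq_add_three_mul_sq_eq_pow_three hpq h)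
  obtain ⟨γ, hγ⟩ := exists_associated_pow_of_mul_eq_pow' hco
    (by rw [ofSqrt_mul_conj, h, Int.cast_pow] : _ = (S : EisensteinInt) ^ 3)
  obtain ⟨δ, hδ⟩ := exists_pow_three_eq_of_associated hodd hγ
  obtain ⟨u, v, huv⟩ := exists_ofSqrt_pow_three_eq δ
  rw [hδ, ofSqrt_pow_three] at huv
  obtain ⟨hp, hq⟩ := ofSqrt_injective huv
  exact ⟨u, v, hp.symm, hq.symm⟩

theorem one_lt_natAbs_of_sq_add_three_mul_sq_eq_pow_three {p q S : ℤ} (hp : p ≠ 0)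
    (hq : q ≠ 0) (h : p ^ 2 + 3 * q ^ 2 = S ^ 3) : 1 < S.natAbs := by
  have hp2 : 0 < p ^ 2 := by positivity
  have hq2 : 0 < q ^ 2 := by positivity
  by_contra hS
  obtain ⟨hS1, hS2⟩ : -1 ≤ S ∧ S ≤ 1 := by omega
  interval_cases S <;> omega

theorem isCoprime_of_isCoprime_cube_coeffs {u v : ℤ}
    (h : IsCoprime (u ^ 3 - 9 * u * v ^ 2) (3 * u ^ 2 * v - 3 * v ^ 3)) : IsCoprime u v := by
  have h' : IsCoprime (u * (u ^ 2 - 9 * v ^ 2)) (v * (3 * u ^ 2 - 3 * v ^ 2)) := by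
    convert h using 1 <;> ring
  exact h'.of_mul_left_left.of_mul_right_left

theorem odd_add_of_odd_add_cube_coeffs {u v : ℤ}
    (h : Odd (u ^ 3 - 9 * u * v ^ 2 + (3 * u ^ 2 * v - 3 * v ^ 3))) : Odd (u + v) := by
  rw [← ZMod.intCast_eq_one_iff_odd] at h ⊢
  push_cast at h ⊢
  generalize (u : ZMod 2) = u, (v : ZMod 2) = v at h ⊢
  revert u v
  decide

def IsNontrivialSolution (x y z : ℤ) : Prop :=
  IsCoprime x y ∧ x ^ 3 + y ^ 3 = 2 * z ^ 3 ∧ x ≠ y ∧ x ≠ -y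

theorem exists_isNontrivialSolution_of_mul_eq_pow_three {a b W : ℤ} (hab : IsCoprime a b)
    (hodd : Odd (a + b)) (ha : a ≠ 0) (hb : b ≠ 0) (h : a * ((a - b) * (a + b)) = W ^ 3) :
    ∃ x y z, IsNontrivialSolution x y z ∧ z.natAbs ≤ W.natAbs := by
  have hodd' : Odd (a - b) := by rwa [Int.odd_sub, ← Int.odd_add]
  obtain ⟨A, B, hAB⟩ := hab
  have hsub : IsCoprime a (a - b) := ⟨A + B, -B, by linear_combination hAB⟩
  have hadd : IsCoprime a (a + b) := ⟨A - B, B, by linear_combination hAB⟩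
  have hsub_add : IsCoprime (a - b) (a + b) := by
    obtain ⟨C, D, hCD⟩ := (Int.isCoprime_two_right.mpr hodd').mul_right hsub.symm
    exact ⟨C + D, D, by linear_combination hCD⟩
  obtain ⟨⟨e, he⟩, ⟨E, hE⟩⟩ :=
    Int.eq_pow_of_mul_eq_pow_odd (hsub.mul_right hadd) (by decide) h
  obtain ⟨⟨f, hf⟩, ⟨g, hg⟩⟩ := Int.eq_pow_of_mul_eq_pow_odd hsub_add (by decide) hE
  refine ⟨f, g, e, ⟨?_, ?_, ?_, ?_⟩, ?_⟩
  · rwa [hf, hg, IsCoprime.pow_iff three_pos three_pos] at hsub_add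
  · rw [← hf, ← hg, ← he]; ring
  · rintro rfl
    exact hb (by linarith)
  · rintro rfl
    exact ha (by linarith [Odd.neg_pow (by decide : Odd 3) g])
  · have hW : W ^ 3 ≠ 0 := by
      rw [← h]
      refine mul_ne_zero ha (mul_ne_zero ?_ ?_) <;> rintro h0 <;> simp [h0] at hodd hodd'
    have := Int.natAbs_le_of_dvd_ne_zero ⟨_, h.symm⟩ hW
    rwa [he, Int.natAbs_pow, Int.natAbs_pow, Nat.pow_le_pow_iff_left three_ne_zero] at this

theorem exists_isNontrivialSolution_natAbs_lt_of_not_three_dvd {p q z : ℤ} (hpq : IsCoprime p q)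
    (hodd : Odd (p + q)) (hp : p ≠ 0) (hq : q ≠ 0) (h3 : ¬ 3 ∣ p)
    (h : p * (p ^ 2 + 3 * q ^ 2) = z ^ 3) :
    ∃ x y z', IsNontrivialSolution x y z' ∧ z'.natAbs < z.natAbs := by
  have hco : IsCoprime p (p ^ 2 + 3 * q ^ 2) := by
    have := ((Int.prime_three.coprime_iff_not_dvd.mpr h3).symm.mul_right
      (hpq.pow_right (n := 2))).add_mul_left_right p
    rwa [show 3 * q ^ 2 + p * p = p ^ 2 + 3 * q ^ 2 by ring] at this
  obtain ⟨⟨P, hP⟩, ⟨S, hS⟩⟩ := Int.eq_pow_of_mul_eq_pow_odd hco (by decide) h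
  have hS1 := one_lt_natAbs_of_sq_add_three_mul_sq_eq_pow_three hp hq hS
  have hz : z = P * S :=
    Odd.pow_injective (n := 3) (by decide) (by simp only; rw [mul_pow, ← hP, ← hS, h])
  obtain ⟨u, v, rfl, rfl⟩ := exists_of_sq_add_three_mul_sq_eq_pow_three hpq hS
  have hu3 : IsCoprime u 3 := (Int.prime_three.coprime_iff_not_dvd.mpr fun ⟨k, hk⟩ =>
    h3 ⟨9 * k ^ 3 - 9 * k * v ^ 2, by rw [hk]; ring⟩).symm
  obtain ⟨x, y, z', hsol, hz'⟩ := exists_isNontrivialSolution_of_mul_eq_pow_three (b := 3 * v)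
    (hu3.mul_right (isCoprime_of_isCoprime_cube_coeffs hpq))
    (by convert (odd_add_of_odd_add_cube_coeffs hodd).add_even (even_two_mul v) using 1; ring)
    (by rintro rfl; simp at hp) (by rintro h0; simp [show v = 0 by omega] at hq)
    (by rw [← hP]; ring)
  refine ⟨x, y, z', hsol, hz'.trans_lt ?_⟩
  rw [hz, Int.natAbs_mul]
  exact lt_mul_of_one_lt_right (Int.natAbs_pos.mpr (by rintro rfl; simp [hP] at hp)) hS1

theorem exists_eq_nine_mul_of_three_dvd {p q z : ℤ} (hq3 : ¬ 3 ∣ q) (h3 : 3 ∣ p)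
    (h : p * (p ^ 2 + 3 * q ^ 2) = z ^ 3) :
    ∃ w m, p = 9 * w ∧ z = 3 * m ∧ w * (q ^ 2 + 3 * (3 * w) ^ 2) = m ^ 3 := by
  obtain ⟨r, rfl⟩ := h3
  obtain ⟨m, rfl⟩ : 3 ∣ z := Int.prime_three.dvd_of_dvd_pow (n := 3)
    ⟨r * (9 * r ^ 2 + 3 * q ^ 2), by rw [← h]; ring⟩
  have hr : r * (3 * r ^ 2 + q ^ 2) = 3 * m ^ 3 := by linarith
  obtain ⟨w, rfl⟩ : 3 ∣ r := by
    refine (Int.prime_three.dvd_or_dvd ⟨m ^ 3, hr⟩).resolve_right fun h3 => hq3 ?_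
    exact Int.prime_three.dvd_of_dvd_pow (n := 2) ((dvd_add_right (dvd_mul_right 3 _)).mp h3)
  exact ⟨w, m, by ring, rfl, by linarith⟩

theorem exists_isNontrivialSolution_natAbs_lt_of_three_dvd {p q z : ℤ} (hpq : IsCoprime p q)
    (hodd : Odd (p + q)) (hp : p ≠ 0) (hq : q ≠ 0) (h3 : 3 ∣ p)
    (h : p * (p ^ 2 + 3 * q ^ 2) = z ^ 3) :
    ∃ x y z', IsNontrivialSolution x y z' ∧ z'.natAbs < z.natAbs := by
  have hq3 : ¬ 3 ∣ q := fun hq3 => by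
    have := hpq.isUnit_of_dvd' h3 hq3
    norm_num [Int.isUnit_iff] at this
  obtain ⟨w, m, rfl, rfl, hw⟩ := exists_eq_nine_mul_of_three_dvd hq3 h3 h
  have hwq : IsCoprime w q := hpq.of_mul_left_right
  have hqw : IsCoprime q (3 * w) :=
    (Int.prime_three.coprime_iff_not_dvd.mpr hq3).symm.mul_right hwq.symm
  have hco : IsCoprime w (q ^ 2 + 3 * (3 * w) ^ 2) := by
    have := (hwq.pow_right (n := 2)).add_mul_left_right (27 * w)
    rwa [show q ^ 2 + w * (27 * w) = q ^ 2 + 3 * (3 * w) ^ 2 by ring] at this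
  have hw0 : w ≠ 0 := by rintro rfl; simp at hp
  obtain ⟨⟨W, hW⟩, ⟨S, hS⟩⟩ := Int.eq_pow_of_mul_eq_pow_odd hco (by decide) hw
  have hS1 := one_lt_natAbs_of_sq_add_three_mul_sq_eq_pow_three hq (by positivity) hS
  have hm : m = W * S := Odd.pow_injective (n := 3) (by decide)
    (by simp only; rw [mul_pow, ← hW, ← hS, hw])
  obtain ⟨u, v, rfl, huv⟩ := exists_of_sq_add_three_mul_sq_eq_pow_three hqw hS
  have hw' : w = v * ((u - v) * (u + v)) := by linarith
  have hodd' : Odd (u ^ 3 - 9 * u * v ^ 2 + (3 * u ^ 2 * v - 3 * v ^ 3)) := by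
    rw [← huv, show u ^ 3 - 9 * u * v ^ 2 + 3 * w =
      9 * w + (u ^ 3 - 9 * u * v ^ 2) - 2 * (3 * w) by ring]
    exact hodd.sub_even (even_two_mul _)
  obtain ⟨x, y, z', hsol, hz'⟩ :=
    exists_isNontrivialSolution_of_mul_eq_pow_three (a := v) (b := u)
    (isCoprime_of_isCoprime_cube_coeffs (huv ▸ hqw)).symm
    (add_comm u v ▸ odd_add_of_odd_add_cube_coeffs hodd')
    (by rintro rfl; simp at hw'; exact hw0 hw') (by rintro rfl; simp at hq)
    (by rw [Odd.neg_pow (by decide), ← hW, hw']; ring : _ = (-W) ^ 3)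
  refine ⟨x, y, z', hsol, hz'.trans_lt ?_⟩
  have hW0 : W.natAbs ≠ 0 := by rintro h0; simp [Int.natAbs_eq_zero.mp h0] at hW; exact hw0 hW
  rw [Int.natAbs_neg, Int.natAbs_mul, hm, Int.natAbs_mul, show Int.natAbs 3 = 3 from rfl]
  have := lt_mul_of_one_lt_right (Nat.pos_of_ne_zero hW0) hS1
  omega

theorem IsNontrivialSolution.exists_natAbs_lt {x y z : ℤ} (h : IsNontrivialSolution x y z) :
    ∃ x' y' z', IsNontrivialSolution x' y' z' ∧ z'.natAbs < z.natAbs := by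
  obtain ⟨hxy, heq, hne, hne'⟩ := h
  have hsum : Even (x + y) := by
    have : Even (x ^ 3 + y ^ 3) := ⟨z ^ 3, by rw [heq]; ring⟩
    simpa [Int.even_add, Int.even_pow] using this
  have hx : Odd x := Int.not_even_iff_odd.mp fun hx => by
    have := hxy.isUnit_of_dvd' hx.two_dvd ((Int.even_add.mp hsum).mp hx).two_dvd
    norm_num [Int.isUnit_iff] at this
  obtain ⟨p, hp⟩ := hsum
  obtain ⟨q, rfl⟩ : ∃ q, x = p + q := ⟨x - p, by ring⟩
  obtain rfl : y = p - q := by linarith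
  have hpq : IsCoprime p q := by
    obtain ⟨A, B, hAB⟩ := hxy
    exact ⟨A + B, A - B, by linear_combination hAB⟩
  have h : p * (p ^ 2 + 3 * q ^ 2) = z ^ 3 := by linarith
  have hp0 : p ≠ 0 := by rintro rfl; exact hne' (by ring)
  have hq0 : q ≠ 0 := by rintro rfl; exact hne (by ring)
  by_cases h3 : 3 ∣ p
  · exact exists_isNontrivialSolution_natAbs_lt_of_three_dvd hpq hx hp0 hq0 h3 h
  · exact exists_isNontrivialSolution_natAbs_lt_of_not_three_dvd hpq hx hp0 hq0 h3 h

theorem not_isNontrivialSolution (x y z : ℤ) : ¬ IsNontrivialSolution x y z := by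
  induction hn : z.natAbs using Nat.strong_induction_on generalizing x y z with
  | _ n ih =>
    intro h
    obtain ⟨x', y', z', h', hlt⟩ := h.exists_natAbs_lt
    exact ih _ (hn ▸ hlt) x' y' z' rfl h'

theorem eq_or_eq_neg_of_pow_three_add_pow_three_eq_two_mul {x y z : ℤ} (hxy : IsCoprime x y)
    (h : x ^ 3 + y ^ 3 = 2 * z ^ 3) : x = y ∨ x = -y := by
  by_contra hne
  rw [not_or] at hne
  exact not_isNontrivialSolution x y z ⟨hxy, h, hne.1, hne.2⟩

theorem odd_of_sq_eq_pow_three_add_one {x y : ℤ} (hy : 0 < y) (h : y ^ 2 = x ^ 3 + 1) :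
    Odd y := by
  by_contra hyo
  rw [Int.not_odd_iff_even] at hyo
  have hco : IsCoprime (y - 1) (y + 1) := by
    obtain ⟨A, B, hAB⟩ := Int.isCoprime_two_right.mpr (hyo.sub_odd odd_one)
    exact ⟨A - B, B, by linear_combination hAB⟩
  obtain ⟨⟨g, hg⟩, ⟨G, hG⟩⟩ := Int.eq_pow_of_mul_eq_pow_odd hco (by decide)
    (by linear_combination h : (y - 1) * (y + 1) = x ^ 3)
  have hgG : IsCoprime G (-g) := by
    rw [hg, hG, IsCoprime.pow_iff three_pos three_pos] at hco
    exact hco.symm.neg_right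
  rcases eq_or_eq_neg_of_pow_three_add_pow_three_eq_two_mul (z := 1) hgG
    (by rw [Odd.neg_pow (by decide), ← hg, ← hG]; ring) with rfl | rfl
  · linarith [Odd.neg_pow (by decide : Odd 3) g]
  · linarith

theorem eq_one_or_eq_neg_one_of_mul_eq_pow_three {a b w : ℤ} (hab : IsCoprime a b)
    (h : a * b = w ^ 3) (hs : a - 2 * b = 1 ∨ a - 2 * b = -1) : a = 1 ∨ a = -1 := by
  obtain ⟨⟨d, rfl⟩, ⟨c, rfl⟩⟩ := Int.eq_pow_of_mul_eq_pow_odd hab (by decide) h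
  suffices d = 1 ∨ d = -1 by rcases this with rfl | rfl <;> norm_num
  rcases hs with hs | hs
  · rcases eq_or_eq_neg_of_pow_three_add_pow_three_eq_two_mul (x := d) (y := -1) (z := c)
      isCoprime_one_right.neg_right (by linear_combination hs) with rfl | rfl <;> norm_num
  · rcases eq_or_eq_neg_of_pow_three_add_pow_three_eq_two_mul (x := d) (y := 1) (z := c)
      isCoprime_one_right (by linear_combination hs) with rfl | rfl <;> norm_num

theorem mul_add_one_eq_two_mul_pow_three {t w : ℤ} (h : t * (t + 1) = 2 * w ^ 3) :
    t = 0 ∨ t = 1 ∨ t = -1 ∨ t = -2 := by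
  rcases Int.even_or_odd t with ⟨n, rfl⟩ | ⟨n, rfl⟩
  · have := eq_one_or_eq_neg_one_of_mul_eq_pow_three (a := n + n + 1) (b := n) ⟨1, -2, by ring⟩
      (by linarith) (Or.inl (by ring))
    omega
  · have := eq_one_or_eq_neg_one_of_mul_eq_pow_three (a := 2 * n + 1) (b := n + 1)
      ⟨-1, 2, by ring⟩ (by linarith) (Or.inr (by ring))
    omega

theorem euler_mordell_one (x y : ℤ) (hx : 0 < x) (hy : 0 < y)
    (h : y ^ 2 = x ^ 3 + 1) : x = 2 ∧ y = 3 := by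
  obtain ⟨t, rfl⟩ := odd_of_sq_eq_pow_three_add_one hy h
  obtain ⟨w, rfl⟩ : Even x :=
    (Int.even_pow' three_ne_zero).mp ⟨2 * t ^ 2 + 2 * t, by linear_combination -h⟩
  have ht : t * (t + 1) = 2 * w ^ 3 := by linarith
  rcases mul_add_one_eq_two_mul_pow_three ht with rfl | rfl | rfl | rfl
  · have : w ^ 3 = 0 := by linarith
    rw [pow_eq_zero_iff three_ne_zero] at this
    omega
  · have : w ^ 3 = 1 ^ 3 := by linarith
    rw [Odd.pow_inj (by decide)] at this
    omega
  all_goals omega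
end
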